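/- For all a, b in (0,1) with a + b in (0,1), the Hessian matrix of v(a,b) = -(1/π)·sin(πa)sin(πb)/sin(π(a+b)) has one strictly positive and one strictly negative eigenvalue. -/

import Mathlib

/-!
With `s = sin (π (a + b))` and `c = cos (π (a + b))`, one has `∂ₓ v = -sin² (π b) / s²`, and the
Hessian is `(2π / s³) • !![sin² (π b) c, -sin (π a) sin (π b); -sin (π a) sin (π b), sin² (π a) c]`.
Since `c² - 1 = -s²`, its determinant is `-(2π sin (π a) sin (π b) / s²)² < 0`. The two eigenvalues
of a symmetric `2 × 2` matrix multiply to its determinant, so they have opposite signs.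
-/
open Real Filter Topology Matrix

theorem Matrix.isHermitian_fin_two_of {α : Type*} [Star α] [TrivialStar α] (p q r : α) :
    (!![p, q; q, r]).IsHermitian := by
  ext i j; fin_cases i <;> fin_cases j <;> simp [star_trivial]

theorem Matrix.IsHermitian.exists_hasEigenvalue_pos_neg_of_det_neg
    {A : Matrix (Fin 2) (Fin 2) ℝ} (hA : A.IsHermitian) (hdet : A.det < 0) :
    ∃ e₁ e₂ : ℝ, 0 < e₁ ∧ e₂ < 0 ∧
      Module.End.HasEigenvalue (toLin' A) e₁ ∧ Module.End.HasEigenvalue (toLin' A) e₂ := by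
  have hev (i : Fin 2) : Module.End.HasEigenvalue (toLin' A) (hA.eigenvalues i) := by
    rw [Module.End.hasEigenvalue_iff_mem_spectrum, spectrum_toLin']
    exact hA.eigenvalues_mem_spectrum_real i
  rw [hA.det_eq_prod_eigenvalues, Fin.prod_univ_two] at hdet
  simp only [RCLike.ofReal_real_eq_id, id] at hdet
  rcases mul_neg_iff.mp hdet with ⟨h₀, h₁⟩ | ⟨h₀, h₁⟩
  · exact ⟨_, _, h₀, h₁, hev 0, hev 1⟩
  · exact ⟨_, _, h₁, h₀, hev 1, hev 0⟩

/-- Both off-diagonal entries are `∂ₓ∂ᵧ f`, so the matrix is symmetric without appealing to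
Schwarz's theorem. -/
noncomputable def hessian (f : ℝ → ℝ → ℝ) (a b : ℝ) : Matrix (Fin 2) (Fin 2) ℝ :=
  !![deriv (deriv fun x => f x b) a, deriv (fun x => deriv (fun y => f x y) b) a;
     deriv (fun x => deriv (fun y => f x y) b) a, deriv (deriv fun y => f a y) b]

theorem isHermitian_hessian (f : ℝ → ℝ → ℝ) (a b : ℝ) : (hessian f a b).IsHermitian :=
  isHermitian_fin_two_of _ _ _

theorem sin_pi_mul_pos {x : ℝ} (hx : x ∈ Set.Ioo (0 : ℝ) 1) : 0 < sin (π * x) :=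
  sin_pos_of_pos_of_lt_pi (mul_pos pi_pos hx.1) (mul_lt_of_lt_one_right pi_pos hx.2)

section
variable (t : ℝ)

theorem hasDerivAt_sin_pi_mul_add (x : ℝ) :
    HasDerivAt (fun x => sin (π * (x + t))) (π * cos (π * (x + t))) x := by
  simpa [mul_comm] using (((hasDerivAt_id x).add_const t).const_mul π).sin

theorem hasDerivAt_sin_pi_mul_div_sin_pi_mul_add {x : ℝ} (h : sin (π * (x + t)) ≠ 0) :
    HasDerivAt (fun x => sin (π * x) / sin (π * (x + t)))
      (π * sin (π * t) / sin (π * (x + t)) ^ 2) x := by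
  have hnum := hasDerivAt_sin_pi_mul_add 0 x
  simp only [add_zero] at hnum
  refine (hnum.div (hasDerivAt_sin_pi_mul_add t x) h).congr_deriv ?_
  have hsub : sin (π * (x + t)) * cos (π * x) - cos (π * (x + t)) * sin (π * x) =
      sin (π * t) := by
    rw [← sin_sub]; ring_nf
  rw [← hsub]; ring

theorem hasDerivAt_inv_sin_pi_mul_add_sq {x : ℝ} (h : sin (π * (x + t)) ≠ 0) :
    HasDerivAt (fun x => (sin (π * (x + t)) ^ 2)⁻¹)
      (-2 * π * cos (π * (x + t)) / sin (π * (x + t)) ^ 3) x := by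
  refine (((hasDerivAt_sin_pi_mul_add t x).fun_pow 2).inv (pow_ne_zero 2 h)).congr_deriv ?_
  field_simp
  ring

theorem eventually_sin_pi_mul_add_ne_zero {a : ℝ} (h : sin (π * (a + t)) ≠ 0) :
    ∀ᶠ x in 𝓝 a, sin (π * (x + t)) ≠ 0 :=
  (by fun_prop : Continuous fun x => sin (π * (x + t))).continuousAt.eventually_ne h

end

noncomputable def sinRatio (x y : ℝ) : ℝ :=
  -(1 / π) * (sin (π * x) * sin (π * y)) / sin (π * (x + y))

theorem sinRatio_comm (x y : ℝ) : sinRatio x y = sinRatio y x := by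
  simp only [sinRatio, mul_comm (sin (π * x)), add_comm x]

theorem hasDerivAt_sinRatio_left (t : ℝ) {x : ℝ} (h : sin (π * (x + t)) ≠ 0) :
    HasDerivAt (fun x => sinRatio x t) (-sin (π * t) ^ 2 * (sin (π * (x + t)) ^ 2)⁻¹) x := by
  have hfun : (fun x => sinRatio x t) =
      fun x => -(1 / π) * sin (π * t) * (sin (π * x) / sin (π * (x + t))) := by
    funext x; simp only [sinRatio]; ring
  rw [hfun]
  refine ((hasDerivAt_sin_pi_mul_div_sin_pi_mul_add t h).const_mul _).congr_deriv ?_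
  field_simp

theorem deriv_deriv_sinRatio_left (t : ℝ) {a : ℝ} (h : sin (π * (a + t)) ≠ 0) :
    deriv (deriv fun x => sinRatio x t) a =
      2 * π * sin (π * t) ^ 2 * cos (π * (a + t)) / sin (π * (a + t)) ^ 3 := by
  have hderiv : deriv (fun x => sinRatio x t) =ᶠ[𝓝 a]
      fun x => -sin (π * t) ^ 2 * (sin (π * (x + t)) ^ 2)⁻¹ := by
    filter_upwards [eventually_sin_pi_mul_add_ne_zero t h] with x hx
    exact (hasDerivAt_sinRatio_left t hx).deriv
  rw [hderiv.deriv_eq, ((hasDerivAt_inv_sin_pi_mul_add_sq t h).const_mul _).deriv]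
  ring

theorem deriv_deriv_sinRatio_right {a b : ℝ} (h : sin (π * (a + b)) ≠ 0) :
    deriv (deriv fun y => sinRatio a y) b =
      2 * π * sin (π * a) ^ 2 * cos (π * (a + b)) / sin (π * (a + b)) ^ 3 := by
  simp only [sinRatio_comm a]
  rw [deriv_deriv_sinRatio_left a (by rwa [add_comm]), add_comm b]

theorem deriv_deriv_sinRatio_mixed {a b : ℝ} (h : sin (π * (a + b)) ≠ 0) :
    deriv (fun x => deriv (fun y => sinRatio x y) b) a =
      -2 * π * sin (π * a) * sin (π * b) / sin (π * (a + b)) ^ 3 := by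
  have hderiv : (fun x => deriv (fun y => sinRatio x y) b) =ᶠ[𝓝 a]
      fun x => -(sin (π * x) / sin (π * (x + b))) ^ 2 := by
    filter_upwards [eventually_sin_pi_mul_add_ne_zero b h] with x hx
    simp only [sinRatio_comm x]
    rw [(hasDerivAt_sinRatio_left x (by rwa [add_comm])).deriv, add_comm b]
    ring
  rw [hderiv.deriv_eq, ((hasDerivAt_sin_pi_mul_div_sin_pi_mul_add b h).fun_pow 2).fun_neg.deriv]
  simp only [Nat.cast_ofNat, Nat.reduceSub, pow_one]
  field_simp

theorem det_hessian_sinRatio {a b : ℝ} (h : sin (π * (a + b)) ≠ 0) :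
    (hessian sinRatio a b).det =
      -(2 * π * sin (π * a) * sin (π * b) / sin (π * (a + b)) ^ 2) ^ 2 := by
  rw [hessian, det_fin_two_of, deriv_deriv_sinRatio_left b h, deriv_deriv_sinRatio_right h,
    deriv_deriv_sinRatio_mixed h]
  field_simp
  linear_combination sin (π * a) ^ 2 * sin (π * b) ^ 2 * sin_sq_add_cos_sq (π * (a + b))

theorem det_hessian_sinRatio_neg {a b : ℝ} (ha : a ∈ Set.Ioo (0 : ℝ) 1)
    (hb : b ∈ Set.Ioo (0 : ℝ) 1) (hab : a + b ∈ Set.Ioo (0 : ℝ) 1) :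
    (hessian sinRatio a b).det < 0 := by
  have hsab := sin_pi_mul_pos hab
  rw [det_hessian_sinRatio hsab.ne', neg_neg_iff_pos]
  have := sin_pi_mul_pos ha
  have := sin_pi_mul_pos hb
  positivity

theorem hessian_has_opposite_sign_eigenvalues
    (a b : ℝ) (ha : a ∈ Set.Ioo (0:ℝ) 1) (hb : b ∈ Set.Ioo (0:ℝ) 1)
    (hab : a + b ∈ Set.Ioo (0:ℝ) 1) :
    let v : ℝ → ℝ → ℝ := fun x y =>
      -(1 / Real.pi) * (Real.sin (Real.pi * x) * Real.sin (Real.pi * y)) /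
        Real.sin (Real.pi * (x + y));
    let vaa := deriv (deriv (fun x => v x b)) a;
    let vbb := deriv (deriv (fun y => v a y)) b;
    let vab := deriv (fun x => deriv (fun y => v x y) b) a;
    ∃ e₁ e₂ : ℝ, 0 < e₁ ∧ e₂ < 0 ∧
      Module.End.HasEigenvalue (Matrix.toLin' !![vaa, vab; vab, vbb]) e₁ ∧
      Module.End.HasEigenvalue (Matrix.toLin' !![vaa, vab; vab, vbb]) e₂ :=
  (isHermitian_hessian sinRatio a b).exists_hasEigenvalue_pos_neg_of_det_neg
    (det_hessian_sinRatio_neg ha hb hab)
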